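/- arXiv:1801.10476 — 9 statements merged into one kernel-verified Lean document; each statement's English description precedes it below -/
import Mathlib

section
/- Reduction rule (RR1) is correct: let (u,v) be an edge of weight M, and let B ≤ M−1 be the maximum weight among all other edges incident to u or v. Then the instance has a feasible solution of total power at most P if and only if the instance obtained by changing the weight of (u,v) to B has a feasible solution of total power at most P−(M−B). -/
lemma pair_eq_aux {V : Type*} [DecidableEq V] {a b u v : V} (huv : u ≠ v)
    (h : ({a, b} : Finset V) = ({u, v} : Finset V)) :
    (a = u ∧ b = v) ∨ (a = v ∧ b = u) := by
  have ha : a ∈ ({u, v} : Finset V) := by rw [← h]; simp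
  have hb : b ∈ ({u, v} : Finset V) := by rw [← h]; simp
  have hu : u ∈ ({a, b} : Finset V) := by rw [h]; simp
  have hv : v ∈ ({a, b} : Finset V) := by rw [h]; simp
  simp only [Finset.mem_insert, Finset.mem_singleton] at ha hb hu hv
  rcases ha with rfl | rfl <;> rcases hb with rfl | rfl <;> tauto

/-- Reduction rule (RR1) for PVC is correct: if edge `(u,v)` has weight `M` and all
other edges incident to `u` or `v` have weight at most `B < M`, then the instance has
a feasible solution of total power at most `P` iff the instance with the weight of
`(u,v)` lowered to `B` has a feasible solution of total power at most `P - (M - B)`. -/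
theorem stmt_1 {V : Type*} [Fintype V] [DecidableEq V] (E : V → V → Prop)
    (w : V → V → ℕ)
    (hEsymm : ∀ a b, E a b → E b a) (hEirr : ∀ a, ¬ E a a)
    (hwsymm : ∀ a b, w a b = w b a)
    (hwpos : ∀ a b, E a b → 0 < w a b)
    (u v : V) (huv : E u v) (M B P : ℕ)
    (hM : w u v = M) (hB : 1 ≤ B) (hBM : B < M)
    (hother : ∀ a b, E a b → ({a, b} : Finset V) ≠ ({u, v} : Finset V) →
      (a = u ∨ a = v ∨ b = u ∨ b = v) → w a b ≤ B) :
    (∃ p : V → ℕ, (∀ a b, E a b → w a b ≤ p a ∨ w a b ≤ p b) ∧ ∑ x, p x ≤ P) ↔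
    (∃ p : V → ℕ,
      (∀ a b, E a b →
        (if ({a, b} : Finset V) = ({u, v} : Finset V) then B else w a b) ≤ p a ∨
        (if ({a, b} : Finset V) = ({u, v} : Finset V) then B else w a b) ≤ p b) ∧
      ∑ x, p x ≤ P - (M - B)) := by
  have huvne : u ≠ v := fun h => hEirr u (h ▸ huv)
  have hvuM : w v u = M := (hwsymm v u).trans hM
  constructor
  · rintro ⟨p, hfeas, hsum⟩
    have key : ∀ z : V, (z = u ∨ z = v) → M ≤ p z →
        ∃ p : V → ℕ,
          (∀ a b, E a b →
            (if ({a, b} : Finset V) = ({u, v} : Finset V) then B else w a b) ≤ p a ∨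
            (if ({a, b} : Finset V) = ({u, v} : Finset V) then B else w a b) ≤ p b) ∧
          ∑ x, p x ≤ P - (M - B) := by
      intro z hz hMz
      refine ⟨Function.update p z (p z - (M - B)), ?_, ?_⟩
      · intro a b hab
        have hBz : B ≤ Function.update p z (p z - (M - B)) z := by
          rw [Function.update_self]; omega
        by_cases hpair : ({a, b} : Finset V) = ({u, v} : Finset V)
        · rw [if_pos hpair]
          rcases pair_eq_aux huvne hpair with ⟨rfl, rfl⟩ | ⟨rfl, rfl⟩ <;>
            rcases hz with rfl | rfl <;> tauto
        · simp only [if_neg hpair]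
          by_cases haz : a = z
          · left
            have : w a b ≤ B := by
              apply hother a b hab hpair; rcases hz with rfl | rfl <;> tauto
            subst haz; exact le_trans this hBz
          · by_cases hbz : b = z
            · right
              have : w a b ≤ B := by
                apply hother a b hab hpair; rcases hz with rfl | rfl <;> tauto
              subst hbz; exact le_trans this hBz
            · rw [Function.update_of_ne haz, Function.update_of_ne hbz]
              exact hfeas a b hab
      · have hmem : z ∈ (Finset.univ : Finset V) := Finset.mem_univ z
        rw [Finset.sum_update_of_mem hmem]
        have h2 : p z + ∑ x ∈ Finset.univ.erase z, p x = ∑ x, p x :=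
          Finset.add_sum_erase _ _ hmem
        rw [Finset.erase_eq] at h2
        omega
    have := hfeas u v huv
    rw [hM] at this
    rcases this with h | h
    · exact key u (Or.inl rfl) h
    · exact key v (Or.inr rfl) h
  · rintro ⟨p, hfeas, hsum⟩
    have key : ∀ z : V, (z = u ∨ z = v) → B ≤ p z →
        ∃ p : V → ℕ, (∀ a b, E a b → w a b ≤ p a ∨ w a b ≤ p b) ∧ ∑ x, p x ≤ P := by
      intro z hz hBz
      -- M - B ≤ P
      have hzsum : p z ≤ ∑ x, p x := Finset.single_le_sum (fun _ _ => Nat.zero_le _) (Finset.mem_univ z)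
      have hMBP : M - B < P := by omega
      refine ⟨Function.update p z (p z + (M - B)), ?_, ?_⟩
      · intro a b hab
        have hMz : M ≤ Function.update p z (p z + (M - B)) z := by
          rw [Function.update_self]; omega
        have hmono : ∀ x, p x ≤ Function.update p z (p z + (M - B)) x := by
          intro x
          by_cases hxz : x = z
          · subst hxz; rw [Function.update_self]; omega
          · rw [Function.update_of_ne hxz]
        by_cases hpair : ({a, b} : Finset V) = ({u, v} : Finset V)
        · rcases pair_eq_aux huvne hpair with ⟨rfl, rfl⟩ | ⟨rfl, rfl⟩ <;>
            rcases hz with rfl | rfl <;> simp [hM, hvuM] <;> omega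
        · have := hfeas a b hab
          rw [if_neg hpair] at this
          rcases this with h | h
          · exact Or.inl (le_trans h (hmono a))
          · exact Or.inr (le_trans h (hmono b))
      · have hmem : z ∈ (Finset.univ : Finset V) := Finset.mem_univ z
        rw [Finset.sum_update_of_mem hmem]
        have h2 : p z + ∑ x ∈ Finset.univ.erase z, p x = ∑ x, p x :=
          Finset.add_sum_erase _ _ hmem
        rw [Finset.erase_eq] at h2
        omega
    have := hfeas u v huv
    rw [if_pos rfl] at this
    rcases this with h | h
    · exact key u (Or.inl rfl) h
    · exact key v (Or.inr rfl) h
end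

section
/- Reduction rule (RR2) is correct for DPVC: if u is a vertex with P(u) ≤ M(u), where M(u)=max over z∈N(u) of w_{u,z} and P(u)=sum over z∈N(u) of w_{z,u}, and v is a neighbor achieving w_{u,v}=M(u), then there exists an optimal solution in which p_v ≥ w_{v,u}. -/
/-- Reduction rule (RR2) for DPVC is correct: if `u` satisfies
`P(u) = ∑_{z ∈ N(u)} w z u ≤ M(u) = max_{z ∈ N(u)} w u z` and `v` is a neighbor
achieving `w u v = M(u)`, then there is an optimal solution with `p v ≥ w v u`. -/
theorem stmt_2 {V : Type*} [Fintype V] [DecidableEq V] (E : V → V → Prop)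
    [DecidableRel E]
    (w : V → V → ℕ)
    (hEsymm : ∀ a b, E a b → E b a) (hEirr : ∀ a, ¬ E a a)
    (hwpos : ∀ a b, E a b → 0 < w a b)
    (u v : V) (huv : E u v)
    (hMuv : ∀ z, E u z → w u z ≤ w u v)
    (hPM : ∑ z ∈ Finset.univ.filter (fun z => E u z), w z u ≤ w u v) :
    ∃ p : V → ℕ,
      (∀ a b, E a b → w a b ≤ p a ∨ w b a ≤ p b) ∧
      (∀ q : V → ℕ, (∀ a b, E a b → w a b ≤ q a ∨ w b a ≤ q b) →
        ∑ x, p x ≤ ∑ x, q x) ∧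
      w v u ≤ p v := by
  classical
  set S : Set ℕ := {n | ∃ q : V → ℕ,
      (∀ a b, E a b → w a b ≤ q a ∨ w b a ≤ q b) ∧ ∑ x, q x = n} with hS
  have hSne : S.Nonempty := by
    refine ⟨∑ x, Finset.univ.sup (w x), fun x => Finset.univ.sup (w x), ?_, rfl⟩
    intro a b hab
    exact Or.inl (Finset.le_sup (Finset.mem_univ b))
  obtain ⟨q, hq, hqsum⟩ := Nat.sInf_mem hSne
  have hqopt : ∀ q' : V → ℕ, (∀ a b, E a b → w a b ≤ q' a ∨ w b a ≤ q' b) →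
      ∑ x, q x ≤ ∑ x, q' x := by
    intro q' hq'
    rw [hqsum]
    exact Nat.sInf_le ⟨q', hq', rfl⟩
  by_cases hv : w v u ≤ q v
  · exact ⟨q, hq, hqopt, hv⟩
  · push_neg at hv
    have hqu : w u v ≤ q u := (hq u v huv).resolve_right (not_le.mpr hv)
    set p : V → ℕ := fun z => if z = u then 0 else
        if E u z then max (q z) (w z u) else q z with hp
    have hpge : ∀ z, z ≠ u → q z ≤ p z := by
      intro z hz
      simp only [hp, if_neg hz]
      split
      · exact le_max_left _ _
      · exact le_rfl
    have hpfeas : ∀ a b, E a b → w a b ≤ p a ∨ w b a ≤ p b := by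
      intro a b hab
      by_cases ha : a = u
      · rw [ha] at hab ⊢
        have hbu : b ≠ u := fun h => hEirr u (h ▸ hab)
        right
        simp only [hp, if_neg hbu, if_pos hab]
        exact le_max_right _ _
      · by_cases hb : b = u
        · rw [hb] at hab ⊢
          left
          have hua : E u a := hEsymm a u hab
          simp only [hp, if_neg ha, if_pos hua]
          exact le_max_right _ _
        · rcases hq a b hab with h | h
          · exact Or.inl (h.trans (hpge a ha))
          · exact Or.inr (h.trans (hpge b hb))
    have hkey : ∀ z ∈ Finset.univ.erase u,
        p z ≤ q z + (if E u z then w z u else 0) := by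
      intro z hz
      have hzu : z ≠ u := (Finset.mem_erase.mp hz).1
      simp only [hp, if_neg hzu]
      split
      · exact max_le (Nat.le_add_right _ _) (Nat.le_add_left _ _)
      · simp
    have hsum : ∑ x, p x ≤ ∑ x, q x := by
      have h1 : ∑ x, p x = ∑ x ∈ Finset.univ.erase u, p x := by
        rw [← Finset.sum_erase_add _ _ (Finset.mem_univ u)]
        simp [hp]
      have h2 : ∑ x ∈ Finset.univ.erase u, p x ≤
          ∑ x ∈ Finset.univ.erase u, (q x + (if E u x then w x u else 0)) :=
        Finset.sum_le_sum hkey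
      have h3 : ∑ x ∈ Finset.univ.erase u, (q x + (if E u x then w x u else 0)) =
          ∑ x ∈ Finset.univ.erase u, q x +
          ∑ x ∈ (Finset.univ.erase u).filter (fun z => E u z), w x u := by
        rw [Finset.sum_add_distrib, Finset.sum_filter]
      have hfilt : (Finset.univ.erase u).filter (fun z => E u z) =
          Finset.univ.filter (fun z => E u z) := by
        ext z
        simp only [Finset.mem_filter, Finset.mem_erase, Finset.mem_univ, true_and,
          and_true]
        constructor
        · tauto
        · intro h
          exact ⟨fun hzu => hEirr u (hzu ▸ h), h⟩
      have h4 : ∑ x ∈ (Finset.univ.erase u).filter (fun z => E u z), w x u ≤ q u := by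
        rw [hfilt]
        exact hPM.trans hqu
      calc ∑ x, p x = ∑ x ∈ Finset.univ.erase u, p x := h1
        _ ≤ ∑ x ∈ Finset.univ.erase u, q x +
            ∑ x ∈ (Finset.univ.erase u).filter (fun z => E u z), w x u := h2.trans h3.le
        _ ≤ ∑ x ∈ Finset.univ.erase u, q x + q u := by omega
        _ = ∑ x, q x := Finset.sum_erase_add _ _ (Finset.mem_univ u)
    refine ⟨p, hpfeas, fun q' hq' => hsum.trans (hqopt q' hq'), ?_⟩
    have hvu : v ≠ u := fun h => hEirr u (h ▸ huv)
    simp only [hp, if_neg hvu, if_pos huv]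
    exact le_max_right _ _
end

section
/- Reduction rule (RR3) is correct for DPVC: suppose (u,v) is an edge with w_{u,v}=w_{v,u}=2, w_{u,z}=1 for all z∈N(u)\{v}, and w_{v,z}=1 for all z∈N(v)\{u}. Then the instance has a feasible solution of total power at most P if and only if the instance obtained by setting w_{u,v}=w_{v,u}=1 has a feasible solution of total power at most P−1. -/
lemma aux1 {V : Type*} [Fintype V] [DecidableEq V] (E : V → V → Prop)
    (w W : V → V → ℕ) (hEsymm : ∀ a b, E a b → E b a) (u : V)
    (hWu : ∀ b, E u b → W u b ≤ 1)
    (hWoff : ∀ a b, a ≠ u → b ≠ u → W a b = w a b)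
    (p : V → ℕ) (hsat : ∀ a b, E a b → w a b ≤ p a ∨ w b a ≤ p b) (hpu : 2 ≤ p u) :
    ∃ q : V → ℕ, (∀ a b, E a b → W a b ≤ q a ∨ W b a ≤ q b) ∧ ∑ x, q x + 1 = ∑ x, p x := by
  refine ⟨Function.update p u (p u - 1), ?_, ?_⟩
  · intro a b hab
    by_cases hau : a = u
    · subst hau
      left
      rw [Function.update_self]
      have := hWu b hab
      omega
    by_cases hbu : b = u
    · subst hbu
      right
      rw [Function.update_self]
      have := hWu a (hEsymm _ _ hab)
      omega
    rw [Function.update_of_ne hau, Function.update_of_ne hbu,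
      hWoff a b hau hbu, hWoff b a hbu hau]
    exact hsat a b hab
  · have h1 := Finset.sum_update_of_mem (Finset.mem_univ u) p (p u - 1)
    have h2 : ∑ x, p x = p u + ∑ x ∈ Finset.univ \ {u}, p x := by
      rw [Finset.sdiff_singleton_eq_erase, Finset.add_sum_erase _ p (Finset.mem_univ u)]
    rw [h1]
    omega

lemma aux2 {V : Type*} [Fintype V] [DecidableEq V] (E : V → V → Prop)
    (w W : V → V → ℕ) (hEsymm : ∀ a b, E a b → E b a) (u v : V)
    (huv2 : w u v = 2)
    (hu1 : ∀ z, E u z → z ≠ v → w u z = 1)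
    (hWoff : ∀ a b, a ≠ u → b ≠ u → W a b = w a b)
    (p : V → ℕ) (hsat : ∀ a b, E a b → W a b ≤ p a ∨ W b a ≤ p b) (hpu : 1 ≤ p u) :
    ∃ q : V → ℕ, (∀ a b, E a b → w a b ≤ q a ∨ w b a ≤ q b) ∧ ∑ x, q x = ∑ x, p x + 1 := by
  refine ⟨Function.update p u (p u + 1), ?_, ?_⟩
  · intro a b hab
    by_cases hau : a = u
    · subst hau
      left
      rw [Function.update_self]
      by_cases hbv : b = v
      · subst hbv; omega
      · have := hu1 b hab hbv; omega
    by_cases hbu : b = u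
    · have h2 := huv2
      have h3 : a ≠ v → w u a = 1 := fun hav => hu1 a (hEsymm _ _ (hbu ▸ hab)) hav
      subst hbu
      right
      rw [Function.update_self]
      by_cases hav : a = v
      · subst hav; omega
      · have := h3 hav; omega
    rw [Function.update_of_ne hau, Function.update_of_ne hbu]
    have := hsat a b hab
    rw [hWoff a b hau hbu, hWoff b a hbu hau] at this
    exact this
  · have h1 := Finset.sum_update_of_mem (Finset.mem_univ u) p (p u + 1)
    have h2 : ∑ x, p x = p u + ∑ x ∈ Finset.univ \ {u}, p x := by
      rw [Finset.sdiff_singleton_eq_erase, Finset.add_sum_erase _ p (Finset.mem_univ u)]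
    rw [h1]
    omega

/-- Reduction rule (RR3) for DPVC is correct: if edge `(u,v)` has
`w u v = w v u = 2`, all other edges at `u` have `w u z = 1` and all other edges at
`v` have `w v z = 1`, then the instance has a feasible solution of total power at most
`P` iff the instance with `w u v = w v u = 1` has one of total power at most `P - 1`. -/
theorem stmt_3 {V : Type*} [Fintype V] [DecidableEq V] (E : V → V → Prop)
    (w : V → V → ℕ)
    (hEsymm : ∀ a b, E a b → E b a) (hEirr : ∀ a, ¬ E a a)
    (hwpos : ∀ a b, E a b → 0 < w a b)
    (u v : V) (huv : E u v) (P : ℕ)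
    (huv2 : w u v = 2) (hvu2 : w v u = 2)
    (hu1 : ∀ z, E u z → z ≠ v → w u z = 1)
    (hv1 : ∀ z, E v z → z ≠ u → w v z = 1) :
    (∃ p : V → ℕ, (∀ a b, E a b → w a b ≤ p a ∨ w b a ≤ p b) ∧ ∑ x, p x ≤ P) ↔
    (∃ p : V → ℕ,
      (∀ a b, E a b →
        (if (a = u ∧ b = v) ∨ (a = v ∧ b = u) then 1 else w a b) ≤ p a ∨
        (if (b = u ∧ a = v) ∨ (b = v ∧ a = u) then 1 else w b a) ≤ p b) ∧
      ∑ x, p x ≤ P - 1) := by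
  have hune : u ≠ v := by rintro rfl; exact hEirr u huv
  set W : V → V → ℕ := fun a b => if (a = u ∧ b = v) ∨ (a = v ∧ b = u) then 1 else w a b
    with hW
  constructor
  · rintro ⟨p, hsat, hsum⟩
    have h := hsat u v huv
    rw [huv2, hvu2] at h
    rcases h with hpu | hpv
    · obtain ⟨q, hq, hqs⟩ := aux1 E w W hEsymm u
        (fun b hb => by
          by_cases hbv : b = v
          · subst hbv; simp [hW]
          · simp only [hW]
            rw [if_neg (by tauto), hu1 b hb hbv])
        (fun a b ha hb => by simp only [hW]; rw [if_neg (by tauto)])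
        p hsat hpu
      have hle : 2 ≤ ∑ x, p x :=
        le_trans hpu (Finset.single_le_sum (fun i _ => Nat.zero_le _) (Finset.mem_univ u))
      exact ⟨q, hq, by omega⟩
    · obtain ⟨q, hq, hqs⟩ := aux1 E w W hEsymm v
        (fun b hb => by
          by_cases hbu : b = u
          · subst hbu; simp [hW]
          · simp only [hW]
            rw [if_neg (by tauto), hv1 b hb hbu])
        (fun a b ha hb => by simp only [hW]; rw [if_neg (by tauto)])
        p hsat hpv
      have hle : 2 ≤ ∑ x, p x :=
        le_trans hpv (Finset.single_le_sum (fun i _ => Nat.zero_le _) (Finset.mem_univ v))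
      exact ⟨q, hq, by omega⟩
  · rintro ⟨p, hsat, hsum⟩
    have h := hsat u v huv
    rw [if_pos (by tauto), if_pos (by tauto)] at h
    rcases h with hpu | hpv
    · obtain ⟨q, hq, hqs⟩ := aux2 E w W hEsymm u v huv2 hu1
        (fun a b ha hb => by simp only [hW]; rw [if_neg (by tauto)])
        p hsat hpu
      have hle : 1 ≤ ∑ x, p x :=
        le_trans hpu (Finset.single_le_sum (fun i _ => Nat.zero_le _) (Finset.mem_univ u))
      exact ⟨q, hq, by omega⟩
    · obtain ⟨q, hq, hqs⟩ := aux2 E w W hEsymm v u hvu2 hv1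
        (fun a b ha hb => by simp only [hW]; rw [if_neg (by tauto)])
        p hsat hpv
      have hle : 1 ≤ ∑ x, p x :=
        le_trans hpv (Finset.single_le_sum (fun i _ => Nat.zero_le _) (Finset.mem_univ v))
      exact ⟨q, hq, by omega⟩
end

section
/- If a DPVC instance admits a feasible solution in which at most k vertices receive positive power, then every vertex u of degree at least k+1 must cover all but at most k of its incident edges; consequently, in any such solution, p_u ≥ w_{k+1}, where w_1 ≥ w_2 ≥ … ≥ w_{d(u)} is the non-increasing ordering of the weights w_{u,z} for z∈N(u). -/
/-- In a DPVC solution with at most `k` vertices of positive power, a vertex `u` of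
degree at least `k+1` covers all but at most `k` of its incident edges; consequently
among any `k+1` of its neighbors there is one `z` with `p u ≥ w u z`, i.e.
`p u ≥ w_{k+1}` for the non-increasing ordering of the weights `w u z`. -/
theorem stmt_4 {V : Type*} [Fintype V] [DecidableEq V] (E : V → V → Prop)
    [DecidableRel E]
    (w : V → V → ℕ)
    (hEsymm : ∀ a b, E a b → E b a) (hEirr : ∀ a, ¬ E a a)
    (hwpos : ∀ a b, E a b → 0 < w a b)
    (p : V → ℕ)
    (hfeas : ∀ a b, E a b → w a b ≤ p a ∨ w b a ≤ p b)
    (k : ℕ) (hk : 0 < k)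
    (hcard : (Finset.univ.filter (fun x => 0 < p x)).card ≤ k)
    (u : V) (hdeg : k + 1 ≤ (Finset.univ.filter (fun z => E u z)).card) :
    (Finset.univ.filter (fun z => E u z ∧ p u < w u z)).card ≤ k ∧
    ∀ s : Finset V, (∀ z ∈ s, E u z) → s.card = k + 1 → ∃ z ∈ s, w u z ≤ p u := by
  have key : ∀ z, E u z → p u < w u z → 0 < p z := by
    intro z hE hlt
    rcases hfeas u z hE with h | h
    · omega
    · exact lt_of_lt_of_le (hwpos z u (hEsymm u z hE)) h
  constructor
  · refine le_trans (Finset.card_le_card ?_) hcard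
    intro z hz
    simp only [Finset.mem_filter, Finset.mem_univ, true_and] at hz ⊢
    exact key z hz.1 hz.2
  · intro s hs hcardS
    by_contra hcon
    push_neg at hcon
    have hsub : s ⊆ Finset.univ.filter (fun x => 0 < p x) := by
      intro z hz
      simp only [Finset.mem_filter, Finset.mem_univ, true_and]
      exact key z (hs z hz) (lt_of_not_ge (fun h => absurd h (not_le.mpr (hcon z hz))))
    have := Finset.card_le_card hsub
    omega
end

section
/- For the choice gadget, any feasible PVC solution whose restriction to the gadget has total power at most n²+n must assign power values p_u and p_{u'} with p_u + p_{u'} = n, and must assign power exactly n to exactly n of the 2n degree-two vertices (one endpoint of each of the n internal matching edges). -/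
/-- Choice gadget: vertices `u, u'` and matching edges `(a_i, b_i)` (for `i : Fin n`)
of weight `n`, with edge `(u, a_i)` of weight `i+1` and edge `(u', b_i)` of weight
`n-i`. If a feasible solution (with each degree-two vertex getting value `0` or `n`)
has total power at most `n² + n`, then `p_u + p_{u'} = n` and exactly one endpoint of
each matching edge gets power `n` (so exactly `n` of the `2n` degree-two vertices). -/
theorem stmt_6 (n : ℕ) (hn : 2 ≤ n)
    (pu pu' : ℕ) (pa pb : Fin n → ℕ)
    (hres : ∀ i, (pa i = 0 ∨ pa i = n) ∧ (pb i = 0 ∨ pb i = n))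
    (hmatch : ∀ i : Fin n, n ≤ pa i ∨ n ≤ pb i)
    (hu : ∀ i : Fin n, (i : ℕ) + 1 ≤ pu ∨ (i : ℕ) + 1 ≤ pa i)
    (hu' : ∀ i : Fin n, n - (i : ℕ) ≤ pu' ∨ n - (i : ℕ) ≤ pb i)
    (htot : pu + pu' + ∑ i, pa i + ∑ i, pb i ≤ n ^ 2 + n) :
    pu + pu' = n ∧
    (∀ i, (pa i = n ∧ pb i = 0) ∨ (pa i = 0 ∧ pb i = n)) ∧
    (Finset.univ.filter (fun i => pa i = n)).card +
      (Finset.univ.filter (fun i => pb i = n)).card = n := by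
  have h1 : ∀ i : Fin n, n ≤ pa i + pb i := fun i => by rcases hmatch i with h | h <;> omega
  have hsum : ∑ i, pa i + ∑ i, pb i = ∑ i : Fin n, (pa i + pb i) :=
    (Finset.sum_add_distrib).symm
  have hnn : n ^ 2 = n * n := sq n
  have h3 : n ≤ n * n := Nat.le_mul_of_pos_left n (by omega)
  have h2 : (n - 1) * n = n * n - n := Nat.sub_one_mul n n
  have hE : ∀ i : Fin n,
      (n - 1) * n ≤ ∑ j ∈ Finset.univ.erase i, (pa j + pb j) := by
    intro i
    calc (n - 1) * n = ∑ j ∈ Finset.univ.erase i, n := by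
          rw [Finset.sum_const, Finset.card_erase_of_mem (Finset.mem_univ i),
            Finset.card_univ, Fintype.card_fin, smul_eq_mul]
      _ ≤ _ := Finset.sum_le_sum fun j _ => h1 j
  have hS : n * n ≤ ∑ i : Fin n, (pa i + pb i) := by
    calc n * n = ∑ _i : Fin n, n := by
          rw [Finset.sum_const, Finset.card_univ, Fintype.card_fin, smul_eq_mul]
      _ ≤ _ := Finset.sum_le_sum fun i _ => h1 i
  have hge : n ≤ pu + pu' := by
    by_contra hlt
    push_neg at hlt
    have hp : pu < n := by omega
    have hva : ((⟨pu, hp⟩ : Fin n) : ℕ) = pu := rfl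
    have hpa0 : pa ⟨pu, hp⟩ = n := by
      rcases hu ⟨pu, hp⟩ with h | h
      · rw [hva] at h; omega
      · rcases (hres ⟨pu, hp⟩).1 with h0 | h0 <;> rw [hva] at h <;> omega
    have hpb0 : pb ⟨pu, hp⟩ = n := by
      rcases hu' ⟨pu, hp⟩ with h | h
      · rw [hva] at h; omega
      · rcases (hres ⟨pu, hp⟩).2 with h0 | h0 <;> rw [hva] at h <;> omega
    have key : n * n + n ≤ ∑ i : Fin n, (pa i + pb i) := by
      have heq := Finset.sum_erase_add Finset.univ (fun i => pa i + pb i)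
        (Finset.mem_univ (⟨pu, hp⟩ : Fin n))
      have := hE ⟨pu, hp⟩
      omega
    have hz : pu = 0 ∧ pu' = 0 := by omega
    have hall : ∀ i : Fin n, pa i + pb i = 2 * n := by
      intro i
      have ha := hu i
      have hb := hu' i
      have hi : (i : ℕ) < n := i.isLt
      rcases (hres i).1 with h | h <;> rcases (hres i).2 with h' | h' <;> omega
    have hbig : ∑ i : Fin n, (pa i + pb i) = n * (2 * n) := by
      rw [Finset.sum_congr rfl fun i _ => hall i, Finset.sum_const,
        Finset.card_univ, Fintype.card_fin, smul_eq_mul]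
    have hfin : n * (2 * n) ≤ n * n + n := by omega
    nlinarith
  have hS2 : ∑ i : Fin n, (pa i + pb i) ≤ n * n := by omega
  have hpair : ∀ i : Fin n, pa i + pb i = n := by
    intro i
    have heq := Finset.sum_erase_add Finset.univ (fun j => pa j + pb j) (Finset.mem_univ i)
    have := hE i
    have := h1 i
    omega
  have hboth : ∀ i, (pa i = n ∧ pb i = 0) ∨ (pa i = 0 ∧ pb i = n) := by
    intro i
    have := hpair i
    rcases (hres i).1 with h | h <;> rcases (hres i).2 with h' | h' <;> omega
  refine ⟨by omega, hboth, ?_⟩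
  have hfe : Finset.univ.filter (fun i => pb i = n) =
      Finset.univ.filter (fun i => ¬ pa i = n) := by
    apply Finset.filter_congr
    intro i _
    rcases hboth i with ⟨ha, hb⟩ | ⟨ha, hb⟩ <;> simp [ha, hb] <;> omega
  rw [hfe, Finset.card_filter_add_card_filter_not,
    Finset.card_univ, Fintype.card_fin]
end

section
/- In the choice gadget, for every integer i with 0 ≤ i ≤ n there exists a feasible assignment of total power exactly n²+n in which p_u = i and p_{u'} = n−i. -/
/-- In the choice gadget, for every `i ≤ n` there is a feasible assignment of total
power exactly `n² + n` with `p_u = i` and `p_{u'} = n - i`. -/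
theorem stmt_7 (n i : ℕ) (hi : i ≤ n) :
    ∃ pa pb : Fin n → ℕ,
      (∀ j : Fin n, n ≤ pa j ∨ n ≤ pb j) ∧
      (∀ j : Fin n, (j : ℕ) + 1 ≤ i ∨ (j : ℕ) + 1 ≤ pa j) ∧
      (∀ j : Fin n, n - (j : ℕ) ≤ n - i ∨ n - (j : ℕ) ≤ pb j) ∧
      i + (n - i) + ∑ j, pa j + ∑ j, pb j = n ^ 2 + n := by
  refine ⟨fun j => if i ≤ (j : ℕ) then n else 0,
          fun j => if (j : ℕ) < i then n else 0, ?_, ?_, ?_, ?_⟩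
  · intro j; by_cases h : i ≤ (j : ℕ)
    · left; simp [h]
    · right; simp [Nat.lt_of_not_le h]
  · intro j; by_cases h : i ≤ (j : ℕ)
    · right; simp [h]
    · left; omega
  · intro j; by_cases h : i ≤ (j : ℕ)
    · left; omega
    · right; simp [Nat.lt_of_not_le h]
  · have hsum : ∑ j : Fin n, ((if i ≤ (j : ℕ) then n else 0) + (if (j : ℕ) < i then n else 0)) = n * n := by
      have : ∀ j : Fin n, (if i ≤ (j : ℕ) then n else 0) + (if (j : ℕ) < i then n else 0) = n := by
        intro j; by_cases h : i ≤ (j : ℕ) <;> simp [h]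
      simp [this, Finset.sum_const, Finset.card_univ]
    have := Finset.sum_add_distrib (s := (Finset.univ : Finset (Fin n)))
      (f := fun j : Fin n => if i ≤ (j : ℕ) then n else 0)
      (g := fun j : Fin n => if (j : ℕ) < i then n else 0)
    simp only [] at hsum ⊢
    rw [this] at hsum
    rw [pow_two]
    omega
end

section
/- If G has a vertex cover of size k, then the PVC instance obtained from G by giving all edges of G weight 2, adding all non-edges with weight 1, and adding a new vertex v_0 adjacent to all original vertices with weight-1 edges, has a feasible solution of total power |V|+k; conversely, any feasible solution of this PVC instance of total power |V|+k yields a vertex cover of G of size at most k. -/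
/-- NP-hardness construction on complete graphs: edges of `G` get weight 2, non-edges
of `G` get weight 1, and a new vertex `v₀` (modeled as `none : Option V`) is joined to
all vertices by weight-1 edges. If `G` has a vertex cover of size `k` then the PVC
instance has a feasible solution of total power `|V| + k`; conversely any feasible
solution of total power `|V| + k` yields a vertex cover of `G` of size at most `k`. -/
theorem stmt_9 {V : Type*} [Fintype V] [DecidableEq V] (E : V → V → Prop)
    [DecidableRel E]
    (hEsymm : ∀ a b, E a b → E b a) (hEirr : ∀ a, ¬ E a a)
    (hV : 2 ≤ Fintype.card V) (k : ℕ) :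
    (∀ C : Finset V, (∀ a b, E a b → a ∈ C ∨ b ∈ C) → C.card = k →
      ∃ p : Option V → ℕ,
        (∀ a b : V, a ≠ b →
          (if E a b then 2 else 1) ≤ p (some a) ∨ (if E a b then 2 else 1) ≤ p (some b)) ∧
        (∀ a : V, 1 ≤ p (some a) ∨ 1 ≤ p none) ∧
        ∑ x : Option V, p x = Fintype.card V + k) ∧
    (∀ p : Option V → ℕ,
      (∀ a b : V, a ≠ b →
        (if E a b then 2 else 1) ≤ p (some a) ∨ (if E a b then 2 else 1) ≤ p (some b)) →
      (∀ a : V, 1 ≤ p (some a) ∨ 1 ≤ p none) →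
      ∑ x : Option V, p x = Fintype.card V + k →
      ∃ C : Finset V, (∀ a b, E a b → a ∈ C ∨ b ∈ C) ∧ C.card ≤ k) := by
  constructor
  · -- forward direction
    intro C hC hCk
    refine ⟨fun x => match x with | none => 0 | some a => if a ∈ C then 2 else 1, ?_, ?_, ?_⟩
    · intro a b hab
      by_cases h : E a b
      · rcases hC a b h with h' | h'
        · left; simp [h, h']
        · right; simp [h, h']
      · left; simp only [h, if_false]; split <;> omega
    · intro a; left; simp only; split <;> omega
    · rw [Fintype.sum_option]
      simp only
      have h1 : ∀ a ∈ Finset.univ, (if a ∈ C then 2 else 1) = (if a ∈ C then 1 else 0) + 1 := by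
        intro a _; split <;> rfl
      rw [Finset.sum_congr rfl h1, Finset.sum_add_distrib]
      simp [Finset.sum_ite_mem, hCk, Nat.add_comm]
  · -- backward direction
    intro p hedge hmid hsum
    set C := Finset.univ.filter (fun a => 2 ≤ p (some a)) with hCdef
    set Z := Finset.univ.filter (fun a => p (some a) = 0) with hZdef
    have hZone : Z.card ≤ 1 := by
      by_contra h
      push_neg at h
      obtain ⟨a, ha, b, hb, hab⟩ := Finset.one_lt_card.mp h
      rw [hZdef, Finset.mem_filter] at ha hb
      rcases hedge a b hab with h' | h' <;> split at h' <;> omega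
    have hZnone : Z.card ≤ p none := by
      rcases Finset.eq_empty_or_nonempty Z with h | ⟨z, hz⟩
      · simp [h]
      · rw [hZdef, Finset.mem_filter] at hz
        rcases hmid z with h' | h' <;> omega
    have hpt : ∀ a ∈ Finset.univ,
        1 + (if a ∈ C then 1 else 0) ≤ p (some a) + (if a ∈ Z then 1 else 0) := by
      intro a _
      have h1 : (if a ∈ C then 1 else 0) = if 2 ≤ p (some a) then 1 else 0 := by
        simp [hCdef]
      have h2 : (if a ∈ Z then 1 else 0) = if p (some a) = 0 then 1 else 0 := by
        simp [hZdef]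
      rw [h1, h2]; split <;> split <;> omega
    have hsum2 := Finset.sum_le_sum hpt
    rw [Finset.sum_add_distrib, Finset.sum_add_distrib] at hsum2
    simp only [Finset.sum_ite_mem, Finset.univ_inter, Finset.sum_const, smul_eq_mul, mul_one,
      Finset.sum_ite_eq] at hsum2
    have htot : ∑ x : Option V, p x = p none + ∑ a : V, p (some a) := Fintype.sum_option p
    have hcover : ∀ a b, E a b → a ∈ C ∨ b ∈ C := by
      intro a b hE
      have hne : a ≠ b := fun h => hEirr a (h ▸ hE)
      rcases hedge a b hne with h' | h'
      · left; rw [hCdef, Finset.mem_filter]; simp only [if_pos hE] at h'; exact ⟨Finset.mem_univ a, h'⟩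
      · right; rw [hCdef, Finset.mem_filter]; simp only [if_pos hE] at h'; exact ⟨Finset.mem_univ b, h'⟩
    refine ⟨C, hcover, ?_⟩
    rw [Finset.card_univ] at hsum2
    omega
end

section
/- There is a PVC instance and an optimal solution of its LP relaxation RPVC assigning value 0 to a vertex v, such that every optimal integral solution of the PVC instance assigns positive power to v. Concretely: take edges (u_1,v_1) and (u_2,v_2) of weight 2 and a vertex v joined to all four vertices by weight-1 edges; then the fractional optimum is 4 (assigning 1 to u_1,v_1,u_2,v_2 and 0 to v), while every optimal integral solution has value 5 and assigns p_v ≥ 1. -/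
/-- The concrete PVC instance on vertices `u₁,v₁,u₂,v₂,v` (indexed `0,1,2,3,4`):
edges `(u₁,v₁)` and `(u₂,v₂)` of weight 2, and edges from `v` to the other four
vertices of weight 1. Fractional feasibility for the LP relaxation RPVC. -/
def fracFeas (x : Fin 5 → ℝ) : Prop :=
  (∀ i, 0 ≤ x i) ∧ 2 ≤ x 0 + x 1 ∧ 2 ≤ x 2 + x 3 ∧
  1 ≤ x 4 + x 0 ∧ 1 ≤ x 4 + x 1 ∧ 1 ≤ x 4 + x 2 ∧ 1 ≤ x 4 + x 3

/-- Integral feasibility for the same PVC instance. -/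
def intFeas (p : Fin 5 → ℕ) : Prop :=
  (2 ≤ p 0 ∨ 2 ≤ p 1) ∧ (2 ≤ p 2 ∨ 2 ≤ p 3) ∧
  (1 ≤ p 4 ∨ 1 ≤ p 0) ∧ (1 ≤ p 4 ∨ 1 ≤ p 1) ∧
  (1 ≤ p 4 ∨ 1 ≤ p 2) ∧ (1 ≤ p 4 ∨ 1 ≤ p 3)

/-! The two weight-2 edges are disjoint, so any (fractional or integral) solution pays at least 4
on them. Fractionally `(1,1,1,1,0)` attains this. Integrally, `p v = 0` forces all four other
vertices to be at least 1 and one vertex of each heavy edge to be at least 2, which costs 6,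
whereas `p v = 1` together with `2` on one end of each heavy edge costs 5. -/

lemma fracFeas_one_one_one_one_zero : fracFeas ![1, 1, 1, 1, 0] := by
  refine ⟨fun i => ?_, ?_, ?_, ?_, ?_, ?_, ?_⟩ <;> try fin_cases i
  all_goals simp only [Matrix.cons_val]; norm_num

lemma four_le_sum_of_fracFeas {x : Fin 5 → ℝ} (hx : fracFeas x) : 4 ≤ ∑ i, x i := by
  obtain ⟨hnonneg, h01, h23, -⟩ := hx
  rw [Fin.sum_univ_five]
  linarith [hnonneg 4]

lemma four_add_le_sum_of_intFeas {p : Fin 5 → ℕ} (hp : intFeas p) : 4 + p 4 ≤ ∑ i, p i := by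
  obtain ⟨h01, h23, -⟩ := hp
  rw [Fin.sum_univ_five]
  omega

lemma six_le_sum_of_intFeas_of_eq_zero {p : Fin 5 → ℕ} (hp : intFeas p) (hv : p 4 = 0) :
    6 ≤ ∑ i, p i := by
  obtain ⟨h01, h23, h0, h1, h2, h3⟩ := hp
  rw [Fin.sum_univ_five]
  omega

lemma five_le_sum_of_intFeas {p : Fin 5 → ℕ} (hp : intFeas p) : 5 ≤ ∑ i, p i := by
  rcases Nat.eq_zero_or_pos (p 4) with hv | hv
  · linarith [six_le_sum_of_intFeas_of_eq_zero hp hv]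
  · linarith [four_add_le_sum_of_intFeas hp]

lemma intFeas_two_zero_two_zero_one : intFeas ![2, 0, 2, 0, 1] := by
  unfold intFeas
  decide

/-- The vector `(1,1,1,1,0)` is an optimal fractional solution (value 4) assigning 0
to `v`, while every optimal integral solution has value 5 and assigns `p v ≥ 1`. -/
theorem stmt_15 :
    fracFeas ![1, 1, 1, 1, 0] ∧
    (∑ i, (![1, 1, 1, 1, 0] : Fin 5 → ℝ) i) = 4 ∧
    (∀ x : Fin 5 → ℝ, fracFeas x → 4 ≤ ∑ i, x i) ∧
    (∀ p : Fin 5 → ℕ, intFeas p → 5 ≤ ∑ i, p i) ∧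
    (∃ p : Fin 5 → ℕ, intFeas p ∧ ∑ i, p i = 5) ∧
    (∀ p : Fin 5 → ℕ, intFeas p → ∑ i, p i = 5 → 1 ≤ p 4) := by
  refine ⟨fracFeas_one_one_one_one_zero, ?_, fun _ => four_le_sum_of_fracFeas,
    fun _ => five_le_sum_of_intFeas, ⟨_, intFeas_two_zero_two_zero_one, by decide⟩, ?_⟩
  · simp only [Fin.sum_univ_five, Matrix.cons_val]
    norm_num
  · intro p hp hsum
    by_contra! hv
    have := six_le_sum_of_intFeas_of_eq_zero hp (Nat.lt_one_iff.mp hv)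
    omega
end

section
/- In the NP-hardness construction of Theorem 6: for a graph G=(V,E), build G' with a vertex for each v∈V, vertices v'_e, v''_e for each edge e∈E, an edge (v'_e, v''_e) of weight 2, and for e=(u,v)∈E edges (u, v'_e) and (v, v''_e) of weight 1. Then G has a vertex cover of size at most s if and only if the PVC instance G' has a feasible solution of total power at most 2|E| + s. -/
/-- The NP-hardness construction of Theorem 6: from `G` (edges indexed by `ι` with
endpoints `fst e ≠ snd e`) build `G'` with, for each edge `e`, gadget vertices
`v'_e = (e, false)` and `v''_e = (e, true)`, an edge `(v'_e, v''_e)` of weight 2, and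
edges `(fst e, v'_e)`, `(snd e, v''_e)` of weight 1. Then `G` has a vertex cover of
size at most `s` iff the PVC instance `G'` has a feasible solution of total power at
most `2|E| + s`. -/
theorem stmt_16 {V ι : Type*} [Fintype V] [Fintype ι] [DecidableEq V]
    (fst snd : ι → V) (hne : ∀ e, fst e ≠ snd e) (s : ℕ) :
    (∃ C : Finset V, (∀ e, fst e ∈ C ∨ snd e ∈ C) ∧ C.card ≤ s) ↔
    (∃ p : V ⊕ ι × Bool → ℕ,
      (∀ e, 2 ≤ p (Sum.inr (e, false)) ∨ 2 ≤ p (Sum.inr (e, true))) ∧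
      (∀ e, 1 ≤ p (Sum.inl (fst e)) ∨ 1 ≤ p (Sum.inr (e, false))) ∧
      (∀ e, 1 ≤ p (Sum.inl (snd e)) ∨ 1 ≤ p (Sum.inr (e, true))) ∧
      ∑ x, p x ≤ 2 * Fintype.card ι + s) := by
  classical
  constructor
  · rintro ⟨C, hcov, hcard⟩
    refine ⟨fun x => match x with
      | Sum.inl v => if v ∈ C then 1 else 0
      | Sum.inr (e, b) => if (fst e ∈ C) = (b = true) then 2 else 0, ?_, ?_, ?_, ?_⟩
    · intro e
      by_cases h : fst e ∈ C
      · right; simp [h]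
      · left; simp [h]
    · intro e
      by_cases h : fst e ∈ C
      · left; simp [h]
      · right; simp [h]
    · intro e
      by_cases h : fst e ∈ C
      · right; simp [h]
      · left; simp [h, (hcov e).resolve_left h]
    · rw [Fintype.sum_sum_type]
      have h1 : (∑ v : V, (if v ∈ C then 1 else 0)) = C.card := by
        rw [Finset.sum_ite_mem, Finset.univ_inter, Finset.sum_const, smul_eq_mul, mul_one]
      have h2 : (∑ x : ι × Bool, (if (fst x.1 ∈ C) = (x.2 = true) then 2 else 0))
          = 2 * Fintype.card ι := by
        rw [Fintype.sum_prod_type]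
        have : ∀ e : ι, (∑ b : Bool, (if (fst e ∈ C) = (b = true) then 2 else 0)) = 2 := by
          intro e; by_cases h : fst e ∈ C <;> simp [h]
        calc (∑ e : ι, ∑ b : Bool, (if (fst e ∈ C) = (b = true) then 2 else 0))
            = ∑ _e : ι, 2 := Finset.sum_congr rfl (fun e _ => this e)
          _ = 2 * Fintype.card ι := by rw [Finset.sum_const, smul_eq_mul, mul_comm]; rfl
      simp only [h1, h2]
      omega
  · rintro ⟨p, hg, hf, hs, htot⟩
    set C : Finset V := Finset.univ.filter (fun v => 1 ≤ p (Sum.inl v)) with hC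
    set U : Finset ι := Finset.univ.filter (fun e => fst e ∉ C ∧ snd e ∉ C) with hU
    refine ⟨C ∪ U.image fst, ?_, ?_⟩
    · intro e
      by_cases h1 : fst e ∈ C
      · exact Or.inl (Finset.mem_union_left _ h1)
      by_cases h2 : snd e ∈ C
      · exact Or.inr (Finset.mem_union_left _ h2)
      · exact Or.inl (Finset.mem_union_right _
          (Finset.mem_image.mpr ⟨e, by simp [hU, h1, h2], rfl⟩))
    · have hcard : (C ∪ U.image fst).card ≤ C.card + U.card :=
        le_trans (Finset.card_union_le _ _)
          (by gcongr; exact Finset.card_image_le)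
    -- bound sum
      have hsum : ∑ x, p x = (∑ v, p (Sum.inl v)) + ∑ e : ι, (p (Sum.inr (e, false)) + p (Sum.inr (e, true))) := by
        rw [Fintype.sum_sum_type, Fintype.sum_prod_type]
        congr 1
        refine Finset.sum_congr rfl fun e _ => ?_
        simp [Fintype.sum_bool, add_comm]
      have hCle : C.card ≤ ∑ v, p (Sum.inl v) := by
        calc C.card = ∑ v ∈ C, 1 := by simp
          _ ≤ ∑ v ∈ C, p (Sum.inl v) := Finset.sum_le_sum (fun v hv => by
              simp [hC] at hv; exact hv)
          _ ≤ ∑ v, p (Sum.inl v) := Finset.sum_le_sum_of_subset (Finset.subset_univ _)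
      have hGle : 2 * Fintype.card ι + U.card ≤
          ∑ e : ι, (p (Sum.inr (e, false)) + p (Sum.inr (e, true))) := by
        have : ∀ e : ι, (2 + if e ∈ U then 1 else 0) ≤
            p (Sum.inr (e, false)) + p (Sum.inr (e, true)) := by
          intro e
          by_cases h : e ∈ U
          · simp only [h, if_true]
            simp only [hU, hC, Finset.mem_filter, Finset.mem_univ, true_and, not_le] at h
            have h1 := (hf e).resolve_left (by omega)
            have h2 := (hs e).resolve_left (by omega)
            rcases hg e with h3 | h3 <;> omega
          · simp only [h, if_false]
            rcases hg e with h3 | h3 <;> omega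
        calc 2 * Fintype.card ι + U.card
            = ∑ e : ι, (2 + if e ∈ U then 1 else 0) := by
              rw [Finset.sum_add_distrib, Finset.sum_const, Finset.sum_ite_mem,
                Finset.univ_inter, Finset.sum_const, smul_eq_mul, smul_eq_mul, mul_one,
                mul_comm]
              rfl
          _ ≤ _ := Finset.sum_le_sum (fun e _ => this e)
      omega
end
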